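/- arXiv:1305.6920 — 2 statements merged into one kernel-verified Lean document; each statement's English description precedes it below -/
import Mathlib

section
/- Let φ ∈ C¹ with compact support on ℝ³, let 0 < ε < r_ε with r_ε = ε^{1/3}, N = 1/ε, and points x₁,…,x_N with |x_i − x_j| > 2 r_ε for i ≠ j. For each i let χ_i be the function supported in B(x_i, r_ε) equal to the solution of Δχ_i = 0 in {ε < |x−x_i| < r_ε}, χ_i = φ(x) − φ(x_i) on B(x_i,ε), χ_i = 0 on |x−x_i| = r_ε, and set Q_ε = Σ_i χ_i. Then ‖Q_ε‖_{L^∞} ≤ 2‖φ‖_{L^∞} and ‖Q_ε‖²_{L²(ℝ³)} ≤ (4π/3)‖∇φ‖²_{L^∞} ε². -/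
/-!
Each `χ i` is harmonic in an annulus around `x i` and is controlled on the complement of that
annulus by its boundary data, so the weak maximum principle bounds it by `2 Cφ` and, through the
mean value inequality `|φ y - φ (x i)| ≤ Cgrad ε` on `B(x i, ε)`, by `Cgrad ε`. The maximum
principle is proved by perturbing with `δ ‖y‖²`, whose Laplacian is positive, so that the perturbed
function cannot have an interior maximum. The supports of the `χ i` lie in the pairwise disjoint
balls `B(x i, rε)`, so `|Q_ε| ≤ max_i ‖χ i‖_∞`, and `Q_ε` vanishes off a union of `N` balls of
volume `(4π/3) rε³ = (4π/3) ε` each, with `N ε = 1`.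
-/

open MeasureTheory Real

noncomputable section

/-- The Laplacian of `f : ℝ³ → ℝ` at `z`, as the trace of the second derivative. -/
def laplacian3 (f : EuclideanSpace ℝ (Fin 3) → ℝ) (z : EuclideanSpace ℝ (Fin 3)) : ℝ :=
  ∑ i : Fin 3, iteratedFDeriv ℝ 2 f z (fun _ => EuclideanSpace.single i (1 : ℝ))

open Set Function Filter Topology InnerProductSpace Laplacian

theorem IsLocalMax.deriv_deriv_nonpos {g : ℝ → ℝ} {t : ℝ} (h : IsLocalMax g t)
    (hc : ContinuousAt g t) : deriv (deriv g) t ≤ 0 := by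
  -- otherwise the second-derivative test makes `t` a local minimum too, so `g` is locally constant
  by_contra! hpos
  have hconst : g =ᶠ[𝓝 t] fun _ ↦ g t :=
    ((isLocalMin_of_deriv_deriv_pos hpos h.deriv_eq_zero hc).and h).mono
      fun s hs ↦ le_antisymm hs.2 hs.1
  have : deriv (deriv g) t = 0 := by
    rw [hconst.deriv.deriv_eq]
    simp
  linarith

section
variable {E : Type*} [NormedAddCommGroup E] [InnerProductSpace ℝ E]

theorem ContDiffAt.deriv_deriv_comp_line {f : E → ℝ} {z : E} (hf : ContDiffAt ℝ 2 f z) (v : E) :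
    deriv (deriv fun t : ℝ ↦ f (z + t • v)) 0 = iteratedFDeriv ℝ 2 f z ![v, v] := by
  have hline : ∀ t : ℝ, HasDerivAt (fun s : ℝ ↦ z + s • v) v t := fun t ↦ by
    simpa using ((hasDerivAt_id t).smul_const v).const_add z
  have hline0 : Tendsto (fun s : ℝ ↦ z + s • v) (𝓝 0) (𝓝 z) := by
    simpa using (hline 0).continuousAt.tendsto
  have hderiv : deriv (fun t : ℝ ↦ f (z + t • v)) =ᶠ[𝓝 0] fun t ↦ fderiv ℝ f (z + t • v) v := by
    filter_upwards [hline0.eventually (hf.eventually (by simp))] with t ht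
    exact ((ht.differentiableAt two_ne_zero).hasFDerivAt.comp_hasDerivAt t (hline t)).deriv
  have hf' : HasFDerivAt (fderiv ℝ f) (fderiv ℝ (fderiv ℝ f) z) (z + (0:ℝ) • v) := by
    simpa using ((hf.fderiv_right (m := 1) le_rfl).differentiableAt one_ne_zero).hasFDerivAt
  have hchain := ((ContinuousLinearMap.apply ℝ ℝ v).hasFDerivAt.comp_hasDerivAt 0
    (hf'.comp_hasDerivAt 0 (hline 0))).deriv
  rw [hderiv.deriv_eq, iteratedFDeriv_two_apply]
  simpa [Function.comp_def] using hchain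

theorem IsLocalMax.iteratedFDeriv_two_nonpos {f : E → ℝ} {z : E} (h : IsLocalMax f z)
    (hf : ContDiffAt ℝ 2 f z) (v : E) : iteratedFDeriv ℝ 2 f z ![v, v] ≤ 0 := by
  have hcont : Continuous fun t : ℝ ↦ z + t • v := by fun_prop
  rw [← hf.deriv_deriv_comp_line v]
  refine IsLocalMax.deriv_deriv_nonpos ?_ ?_
  · exact IsLocalMax.comp_continuous (by simpa using h) hcont.continuousAt
  · have : ContinuousAt f (z + (0:ℝ) • v) := by simpa using hf.continuousAt
    exact this.comp (f := fun t : ℝ ↦ z + t • v) hcont.continuousAt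

theorem abs_image_sub_le_of_norm_gradient_le [CompleteSpace E] {f : E → ℝ} (hf : Differentiable ℝ f)
    {C : ℝ} (hC : ∀ y, ‖gradient f y‖ ≤ C) (a b : E) : |f a - f b| ≤ C * dist a b := by
  have hfd (y : E) : ‖fderiv ℝ f y‖ ≤ C := by
    rw [← (toDual ℝ E).symm.norm_map]
    exact hC y
  simpa [dist_eq_norm] using
    convex_univ.norm_image_sub_le_of_norm_fderiv_le (fun y _ ↦ hf y) (fun y _ ↦ hfd y)
      (mem_univ b) (mem_univ a)

variable [FiniteDimensional ℝ E]

theorem IsLocalMax.laplacian_nonpos {f : E → ℝ} {z : E} (h : IsLocalMax f z)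
    (hf : ContDiffAt ℝ 2 f z) : Δ f z ≤ 0 := by
  rw [laplacian_eq_iteratedFDeriv_stdOrthonormalBasis]
  exact Finset.sum_nonpos fun i _ ↦ h.iteratedFDeriv_two_nonpos hf _

theorem laplacian_norm_sq (z : E) : Δ (fun x : E ↦ ‖x‖ ^ 2) z = 2 * Module.finrank ℝ E := by
  have h2 : fderiv ℝ (fderiv ℝ fun x : E ↦ ‖x‖ ^ 2) z = 2 • innerSL ℝ := by
    rw [fderiv_norm_sq]
    exact (2 • innerSL ℝ : E →L[ℝ] E →L[ℝ] ℝ).fderiv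
  have hb (i) : innerSL ℝ (stdOrthonormalBasis ℝ E i) (stdOrthonormalBasis ℝ E i) = 1 := by
    rw [innerSL_apply_apply, real_inner_self_eq_norm_sq, (stdOrthonormalBasis ℝ E).orthonormal.1,
      one_pow]
  simp [laplacian_eq_iteratedFDeriv_stdOrthonormalBasis, iteratedFDeriv_two_apply, h2, hb, mul_comm]

namespace InnerProductSpace.HarmonicContOnCl

variable [Nontrivial E] {u : E → ℝ} {U : Set E}

theorem mem_frontier_of_isMaxOn_add_smul_norm_sq (hu : HarmonicContOnCl u U) {δ : ℝ}
    (hδ : 0 < δ) {w : E} (hw : w ∈ closure U)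
    (hmax : IsMaxOn (u + δ • fun x ↦ ‖x‖ ^ 2) (closure U) w) : w ∈ frontier U := by
  by_contra hfr
  have hwU : w ∈ interior U := by rw [← closure_sdiff_frontier]; exact ⟨hw, hfr⟩
  obtain ⟨hu₂, hΔu⟩ := hu.harmonicOnNhd w (interior_subset hwU)
  have hq : ContDiffAt ℝ 2 (fun x : E ↦ ‖x‖ ^ 2) w := (contDiff_norm_sq ℝ).contDiffAt
  have hδq : ContDiffAt ℝ 2 (δ • fun x : E ↦ ‖x‖ ^ 2) w := hq.const_smul δ
  have hloc : IsLocalMax (u + δ • fun x ↦ ‖x‖ ^ 2) w :=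
    hmax.isLocalMax (mem_of_superset (isOpen_interior.mem_nhds hwU)
      (interior_subset.trans subset_closure))
  have hle := hloc.laplacian_nonpos (hu₂.add hδq)
  rw [hu₂.laplacian_add hδq, laplacian_smul δ hq, hΔu.eq_of_nhds,
    laplacian_norm_sq] at hle
  have : 0 < δ * (2 * (Module.finrank ℝ E : ℝ)) := by
    have := Module.finrank_pos (R := ℝ) (M := E)
    positivity
  simp only [Pi.zero_apply, zero_add, smul_eq_mul] at hle
  linarith

theorem le_of_forall_mem_frontier_le (hu : HarmonicContOnCl u U) (hU : Bornology.IsBounded U)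
    {C : ℝ} (hC : ∀ z ∈ frontier U, u z ≤ C) {z : E} (hz : z ∈ closure U) : u z ≤ C := by
  obtain ⟨R, hR⟩ := hU.closure.subset_closedBall 0
  refine le_of_forall_pos_le_add fun η hη ↦ ?_
  set δ := η / (R ^ 2 + 1)
  have hδ : 0 < δ := by positivity
  obtain ⟨w, hw, hmax⟩ := hU.isCompact_closure.exists_isMaxOn ⟨z, hz⟩
    (hu.continuousOn.add ((continuous_norm.pow 2).const_smul δ).continuousOn)
  have hwR : ‖w‖ ≤ R := by simpa using hR hw
  have hδR : δ * ‖w‖ ^ 2 ≤ η := calc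
    δ * ‖w‖ ^ 2 ≤ δ * (R ^ 2 + 1) := by gcongr; nlinarith [norm_nonneg w]
    _ = η := div_mul_cancel₀ η (by positivity)
  calc u z ≤ u z + δ * ‖z‖ ^ 2 := le_add_of_nonneg_right (by positivity)
    _ ≤ u w + δ * ‖w‖ ^ 2 := hmax hz
    _ ≤ C + η := add_le_add (hC w (hu.mem_frontier_of_isMaxOn_add_smul_norm_sq hδ hw hmax)) hδR

theorem abs_le_of_forall_mem_frontier_abs_le (hu : HarmonicContOnCl u U)
    (hU : Bornology.IsBounded U) {C : ℝ} (hC : ∀ z ∈ frontier U, |u z| ≤ C) {z : E}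
    (hz : z ∈ closure U) : |u z| ≤ C := by
  refine abs_le.2 ⟨?_, hu.le_of_forall_mem_frontier_le hU (fun w hw ↦ (abs_le.1 (hC w hw)).2) hz⟩
  have := hu.neg.le_of_forall_mem_frontier_le hU (C := C) (fun w hw ↦ ?_) hz
  · exact neg_le.1 this
  · simpa using neg_le.1 (neg_le_of_abs_le (hC w hw))

end InnerProductSpace.HarmonicContOnCl

theorem abs_le_of_harmonicOnNhd_of_forall_notMem_abs_le [Nontrivial E] {u : E → ℝ} {U : Set E}
    (hUo : IsOpen U) (hUb : Bornology.IsBounded U) (hu : Continuous u) (hharm : HarmonicOnNhd u U)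
    {C : ℝ} (hC : ∀ y ∉ U, |u y| ≤ C) (y : E) : |u y| ≤ C := by
  by_cases hy : y ∈ U
  · refine HarmonicContOnCl.abs_le_of_forall_mem_frontier_abs_le ⟨hharm, hu.continuousOn⟩ hUb
      (fun z hz ↦ hC z fun hzU ↦ ?_) (subset_closure hy)
    exact notMem_empty z (hUo.inter_frontier_eq.subset ⟨hzU, hz⟩)
  · exact hC y hy

end

theorem abs_sum_le_of_pairwise_disjoint_support {ι α : Type*} {f : ι → α → ℝ}
    (h : Pairwise (Disjoint on fun i ↦ support (f i))) (s : Finset ι) {C : ℝ} (hC₀ : 0 ≤ C)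
    (hC : ∀ i y, |f i y| ≤ C) (y : α) : |∑ i ∈ s, f i y| ≤ C := by
  by_cases hy : ∃ i ∈ s, f i y ≠ 0
  · obtain ⟨i, hi, hfi⟩ := hy
    rw [Finset.sum_eq_single_of_mem i hi fun j _ hji ↦
      notMem_support.1 fun hfj ↦ disjoint_left.1 (h hji) hfj hfi]
    exact hC i y
  · push Not at hy
    rwa [Finset.sum_eq_zero hy, abs_zero]

theorem integral_sq_le_of_abs_le_of_support_subset {α : Type*} [MeasurableSpace α]
    {μ : Measure α} {f : α → ℝ} {s : Set α} {M : ℝ} (hs : MeasurableSet s) (hμs : μ s ≠ ⊤)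
    (hM : ∀ y, |f y| ≤ M) (hsupp : support f ⊆ s) : ∫ y, f y ^ 2 ∂μ ≤ M ^ 2 * μ.real s := by
  have hpt (y : α) : f y ^ 2 ≤ s.indicator (fun _ ↦ M ^ 2) y := by
    by_cases hy : y ∈ s
    · rw [indicator_of_mem hy, ← sq_abs]
      exact pow_le_pow_left₀ (abs_nonneg _) (hM y) 2
    · rw [indicator_of_notMem hy, notMem_support.1 fun h ↦ hy (hsupp h)]
      simp
  calc ∫ y, f y ^ 2 ∂μ ≤ ∫ y, s.indicator (fun _ ↦ M ^ 2) y ∂μ :=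
        integral_mono_of_nonneg (ae_of_all _ fun y ↦ sq_nonneg _)
          ((integrable_indicator_iff hs).2 (integrableOn_const hμs)) (ae_of_all _ hpt)
    _ = M ^ 2 * μ.real s := by rw [integral_indicator_const _ hs, smul_eq_mul, mul_comm]

theorem laplacian3_eq_laplacian (f : EuclideanSpace ℝ (Fin 3) → ℝ) : laplacian3 f = Δ f := by
  ext z
  rw [laplacian_eq_iteratedFDeriv_orthonormalBasis f (EuclideanSpace.basisFun (Fin 3) ℝ)]
  refine Finset.sum_congr rfl fun i _ ↦ congrArg _ ?_
  ext j : 1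
  fin_cases j <;> simp

theorem measureReal_iUnion_ball_fin_three_le {ι : Type*} [Fintype ι]
    (c : ι → EuclideanSpace ℝ (Fin 3)) {r : ℝ} (hr : 0 ≤ r) :
    volume.real (⋃ i, Metric.ball (c i) r) ≤ Fintype.card ι * (r ^ 3 * (π * 4 / 3)) := by
  have hball (i : ι) : volume.real (Metric.ball (c i) r) = r ^ 3 * (π * 4 / 3) := by
    rw [measureReal_def, EuclideanSpace.volume_ball_fin_three, ENNReal.toReal_mul,
      ENNReal.toReal_pow, ENNReal.toReal_ofReal hr, ENNReal.toReal_ofReal (by positivity)]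
  simpa [hball] using measureReal_iUnion_fintype_le (μ := volume) fun i ↦ Metric.ball (c i) r

theorem abs_le_of_laplacian3_eq_zero_on_annulus {c : EuclideanSpace ℝ (Fin 3)} {ε r C : ℝ}
    {u : EuclideanSpace ℝ (Fin 3) → ℝ} (hu : Continuous u)
    (hreg : ContDiffOn ℝ 2 u {y | ε < dist y c ∧ dist y c < r})
    (hharm : ∀ y, ε < dist y c → dist y c < r → laplacian3 u y = 0)
    (hin : ∀ y, dist y c ≤ ε → |u y| ≤ C) (hout : ∀ y, r ≤ dist y c → u y = 0) (hC : 0 ≤ C)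
    (y : EuclideanSpace ℝ (Fin 3)) : |u y| ≤ C := by
  set A := {y | ε < dist y c ∧ dist y c < r}
  have hAo : IsOpen A :=
    (isOpen_lt continuous_const (continuous_id.dist continuous_const)).inter
      (isOpen_lt (continuous_id.dist continuous_const) continuous_const)
  have hAb : Bornology.IsBounded A := Metric.isBounded_ball.subset fun y hy ↦ hy.2
  have hharmA : HarmonicOnNhd u A := fun y hy ↦ ⟨hreg.contDiffAt (hAo.mem_nhds hy), by
    filter_upwards [hAo.mem_nhds hy] with z hz
    rw [← laplacian3_eq_laplacian]
    exact hharm z hz.1 hz.2⟩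
  refine abs_le_of_harmonicOnNhd_of_forall_notMem_abs_le hAo hAb hu hharmA (fun z hz ↦ ?_) y
  rcases le_or_gt (dist z c) ε with hzε | hzε
  · exact hin z hzε
  · rwa [hout z (not_lt.1 fun hzr ↦ hz ⟨hzε, hzr⟩), abs_zero]

theorem stmt6_general
    (ε rε : ℝ) (hε : 0 < ε) (hrε : rε = ε ^ ((1:ℝ)/3))
    (N : ℕ) (hN : (N : ℝ) = 1 / ε)
    (x : Fin N → EuclideanSpace ℝ (Fin 3))
    (hsep : ∀ i j, i ≠ j → 2 * rε < dist (x i) (x j))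
    (φ : EuclideanSpace ℝ (Fin 3) → ℝ)
    (hφ : ContDiff ℝ 1 φ)
    (Cφ Cgrad : ℝ)
    (hCφ : ∀ y, |φ y| ≤ Cφ) (hCgrad : ∀ y, ‖gradient φ y‖ ≤ Cgrad)
    (χ : Fin N → EuclideanSpace ℝ (Fin 3) → ℝ)
    (hχcont : ∀ i, Continuous (χ i))
    (hχreg : ∀ i, ContDiffOn ℝ 2 (χ i) {y | ε < dist y (x i) ∧ dist y (x i) < rε})
    (hχharm : ∀ i, ∀ y, ε < dist y (x i) → dist y (x i) < rε → laplacian3 (χ i) y = 0)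
    (hχin : ∀ i, ∀ y, dist y (x i) ≤ ε → χ i y = φ y - φ (x i))
    (hχout : ∀ i, ∀ y, rε ≤ dist y (x i) → χ i y = 0) :
    (∀ y, |∑ i, χ i y| ≤ 2 * Cφ) ∧
    ∫ y : EuclideanSpace ℝ (Fin 3), (∑ i, χ i y) ^ 2 ≤ (4 * π / 3) * Cgrad ^ 2 * ε ^ 2 := by
  have hsupp (i) : support (χ i) ⊆ Metric.ball (x i) rε := fun y hy ↦
    Metric.mem_ball.2 (not_le.1 fun h ↦ hy (hχout i y h))
  have hdisj : Pairwise (Disjoint on fun i ↦ support (χ i)) := fun i j hij ↦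
    (Metric.ball_disjoint_ball (by linarith [hsep i j hij])).mono (hsupp i) (hsupp j)
  have hQ {C : ℝ} (hC : 0 ≤ C) (hφC : ∀ i y, dist y (x i) ≤ ε → |φ y - φ (x i)| ≤ C) (y) :
      |∑ i, χ i y| ≤ C :=
    abs_sum_le_of_pairwise_disjoint_support hdisj _ hC (fun i ↦
      abs_le_of_laplacian3_eq_zero_on_annulus (hχcont i) (hχreg i) (hχharm i)
        (fun y hy ↦ hχin i y hy ▸ hφC i y hy) (hχout i) hC) y
  have hCφ₀ : 0 ≤ Cφ := (abs_nonneg _).trans (hCφ 0)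
  have hCgrad₀ : 0 ≤ Cgrad := (norm_nonneg _).trans (hCgrad 0)
  refine ⟨hQ (by positivity) fun i y _ ↦ ?_, ?_⟩
  · linarith [abs_sub (φ y) (φ (x i)), hCφ y, hCφ (x i)]
  have hQε := hQ (C := Cgrad * ε) (by positivity) fun i y hy ↦
    (abs_image_sub_le_of_norm_gradient_le (hφ.differentiable one_ne_zero) hCgrad y (x i)).trans
      (by gcongr)
  have hsuppQ : support (fun y ↦ ∑ i, χ i y) ⊆ ⋃ i, Metric.ball (x i) rε :=
    (Finset.support_sum _ _).trans (by simpa using iUnion_mono hsupp)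
  have hrε₃ : rε ^ 3 = ε := by
    rw [hrε, ← rpow_natCast, ← rpow_mul hε.le]
    norm_num
  calc ∫ y, (∑ i, χ i y) ^ 2
      ≤ (Cgrad * ε) ^ 2 * volume.real (⋃ i, Metric.ball (x i) rε) :=
        integral_sq_le_of_abs_le_of_support_subset (.iUnion fun _ ↦ measurableSet_ball)
          (Bornology.isBounded_iUnion.2 fun _ ↦ Metric.isBounded_ball).measure_lt_top.ne hQε hsuppQ
    _ ≤ (Cgrad * ε) ^ 2 * (N * (rε ^ 3 * (π * 4 / 3))) := by
        gcongr
        simpa using measureReal_iUnion_ball_fin_three_le x (hrε ▸ by positivity)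
    _ = (4 * π / 3) * Cgrad ^ 2 * ε ^ 2 := by
        rw [hrε₃, hN]
        field_simp

/-- Let `φ ∈ C¹_c(ℝ³)` with `|φ| ≤ Cφ` and `‖∇φ‖ ≤ Cgrad`, let
`0 < ε < r_ε = ε^{1/3}`, `N = 1/ε`, and points `x₁, …, x_N` with `|x_i - x_j| > 2 r_ε` for
`i ≠ j`.  For each `i` let `χ_i` be the (continuous) function supported in `B(x_i, r_ε)`,
harmonic in the annulus `{ε < |y - x_i| < r_ε}`, equal to `φ(y) - φ(x_i)` on `B(x_i, ε)` and
vanishing for `|y - x_i| ≥ r_ε`, and set `Q_ε = Σ_i χ_i`.  Then `‖Q_ε‖_∞ ≤ 2 Cφ` and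
`‖Q_ε‖²_{L²(ℝ³)} ≤ (4π/3) Cgrad² ε²`. -/
theorem stmt6
    (ε rε : ℝ) (hε : 0 < ε) (hεlt : ε < 1) (hrε : rε = ε ^ ((1:ℝ)/3))
    (N : ℕ) (hN : (N : ℝ) = 1 / ε)
    (x : Fin N → EuclideanSpace ℝ (Fin 3))
    (hsep : ∀ i j, i ≠ j → 2 * rε < dist (x i) (x j))
    (φ : EuclideanSpace ℝ (Fin 3) → ℝ)
    (hφ : ContDiff ℝ 1 φ) (hφsupp : HasCompactSupport φ)
    (Cφ Cgrad : ℝ)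
    (hCφ : ∀ y, |φ y| ≤ Cφ) (hCgrad : ∀ y, ‖gradient φ y‖ ≤ Cgrad)
    (χ : Fin N → EuclideanSpace ℝ (Fin 3) → ℝ)
    (hχcont : ∀ i, Continuous (χ i))
    (hχreg : ∀ i, ContDiffOn ℝ 2 (χ i) {y | ε < dist y (x i) ∧ dist y (x i) < rε})
    (hχharm : ∀ i, ∀ y, ε < dist y (x i) → dist y (x i) < rε → laplacian3 (χ i) y = 0)
    (hχin : ∀ i, ∀ y, dist y (x i) ≤ ε → χ i y = φ y - φ (x i))
    (hχout : ∀ i, ∀ y, rε ≤ dist y (x i) → χ i y = 0) :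
    (∀ y, |∑ i, χ i y| ≤ 2 * Cφ) ∧
    ∫ y : EuclideanSpace ℝ (Fin 3), (∑ i, χ i y) ^ 2 ≤ (4 * π / 3) * Cgrad ^ 2 * ε ^ 2 :=
  stmt6_general ε rε hε hrε N hN x hsep φ hφ Cφ Cgrad hCφ hCgrad χ hχcont hχreg hχharm hχin hχout
end
end

section
/- Let N = 1/ε, r_ε = ε^{1/3}, points x_i with |x_i − x_j| > 2r_ε, and real numbers T_i with ε Σ_{i=1}^N T_i² ≤ K. Define S_ε(x) = Σ_i T_i χ[1](x − x_i), where χ[1] is the capacity potential of B(0,ε) in B(0,r_ε). Then ‖S_ε‖²_{L²} ≤ (4π/3) ε² r_ε Σ_i T_i² ≤ (4π/3) K ε r_ε → 0 and ‖∇S_ε‖²_{L²} ≤ 4π (ε r_ε/(r_ε − ε)) Σ_i T_i² ≤ 8π K for ε small (e.g. ε < 1/8). -/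
open MeasureTheory Real

noncomputable section

/-- The capacity potential of the ball `B(0,ε)` relative to `B(0,r)` in `ℝ³`. -/
def capPot (ε r : ℝ) (z : EuclideanSpace ℝ (Fin 3)) : ℝ :=
  if ‖z‖ ≤ ε then 1
  else if ‖z‖ < r then (ε * r / (r - ε)) * (1 / ‖z‖ - 1 / r)
  else 0

/- ### Auxiliary development -/

set_option maxHeartbeats 1000000
set_option synthInstance.maxHeartbeats 1000000

local notation "E3" => EuclideanSpace ℝ (Fin 3)

/-- Radial profile of `capPot`. -/
def pchi (ε r : ℝ) (t : ℝ) : ℝ :=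
  if t ≤ ε then 1 else if t < r then (ε * r / (r - ε)) * (1 / t - 1 / r) else 0

lemma capPot_eq_pchi (ε r : ℝ) (z : E3) : capPot ε r z = pchi ε r ‖z‖ := rfl

/-- Radial profile of the gradient bound. -/
def gprof (ε r : ℝ) (t : ℝ) : ℝ :=
  if ε < t ∧ t < r then (ε * r / (r - ε)) * (t^2)⁻¹ else 0

lemma pchi_meas (ε r : ℝ) : Measurable (pchi ε r) := by
  unfold pchi
  refine Measurable.ite (measurableSet_le measurable_id measurable_const) measurable_const ?_
  refine Measurable.ite (measurableSet_lt measurable_id measurable_const) ?_ measurable_const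
  exact (measurable_const.mul ((measurable_const.div measurable_id).sub measurable_const))

lemma gprof_meas (ε r : ℝ) : Measurable (gprof ε r) := by
  unfold gprof
  refine Measurable.ite ?_ (measurable_const.mul ((measurable_id.pow_const 2).inv))
    measurable_const
  exact MeasurableSet.inter (measurableSet_lt measurable_const measurable_id)
    (measurableSet_lt measurable_id measurable_const)

lemma pchi_nonneg {ε r : ℝ} (hε : 0 < ε) (hεr : ε < r) (t : ℝ) : 0 ≤ pchi ε r t := by
  unfold pchi
  split_ifs with h1 h2
  · norm_num
  · push_neg at h1
    have ht : 0 < t := hε.trans h1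
    have hr0 : (0:ℝ) < r := hε.trans hεr
    have : 1/r ≤ 1/t := by
      apply one_div_le_one_div_of_le ht h2.le
    have hc : 0 ≤ ε * r / (r - ε) := div_nonneg (by positivity) (by linarith)
    nlinarith
  · exact le_refl 0

lemma pchi_le_one {ε r : ℝ} (hε : 0 < ε) (hεr : ε < r) (t : ℝ) : pchi ε r t ≤ 1 := by
  unfold pchi
  split_ifs with h1 h2
  · exact le_refl 1
  · push_neg at h1
    have ht : 0 < t := hε.trans h1
    have hr : 0 < r := hε.trans hεr
    have h1t : 1/t - 1/r ≤ 1/ε - 1/r := by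
      have : 1/t ≤ 1/ε := one_div_le_one_div_of_le hε h1.le
      linarith
    have hc : 0 < ε * r / (r - ε) := by
      apply div_pos (by positivity); linarith
    have : ε * r / (r - ε) * (1/t - 1/r) ≤ ε * r / (r - ε) * (1/ε - 1/r) := by
      apply mul_le_mul_of_nonneg_left h1t hc.le
    have heq : ε * r / (r - ε) * (1/ε - 1/r) = 1 := by
      field_simp
      exact div_self (sub_pos.2 hεr).ne'
    linarith
  · exact zero_le_one

lemma split3 (a b : ℝ) (f : ℝ → ℝ) (h0 : 0 < a) (hab : a < b) (hmeas : Measurable f)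
    (M : ℝ) (hbd : ∀ t ∈ Set.Ioc (0:ℝ) b, ‖f t‖ ≤ M) (hzero : ∀ t, b < t → f t = 0) :
    ∫ t in Set.Ioi (0:ℝ), f t = (∫ t in Set.Ioc (0:ℝ) a, f t) + ∫ t in Set.Ioc a b, f t := by
  have hb : 0 < b := h0.trans hab
  have h1 : ∫ t in Set.Ioi (0:ℝ), f t = ∫ t in Set.Ioc (0:ℝ) b, f t := by
    refine setIntegral_eq_of_subset_of_forall_diff_eq_zero (μ := volume)
      (s := Set.Ioc (0:ℝ) b) (t := Set.Ioi (0:ℝ)) (f := f) measurableSet_Ioi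
      Set.Ioc_subset_Ioi_self (fun t ht => ?_)
    obtain ⟨ht0, htn⟩ := ht
    simp only [Set.mem_Ioc, not_and, not_le] at htn
    exact hzero t (htn ht0)
  have hint : IntegrableOn f (Set.Ioc (0:ℝ) b) := by
    apply Measure.integrableOn_of_bounded measure_Ioc_lt_top.ne hmeas.aestronglyMeasurable
    filter_upwards [ae_restrict_mem measurableSet_Ioc] with t ht using hbd t ht
  rw [h1, ← Set.Ioc_union_Ioc_eq_Ioc h0.le hab.le,
    setIntegral_union (Set.Ioc_disjoint_Ioc_of_le le_rfl) measurableSet_Ioc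
      (hint.mono_set (Set.Ioc_subset_Ioc_right hab.le))
      (hint.mono_set (Set.Ioc_subset_Ioc_left h0.le))]

lemma radialL2 (ε rε : ℝ) (hε : 0 < ε) (hεr : ε < rε) :
    ∫ t in Set.Ioi (0:ℝ), t^2 * (pchi ε rε t)^2 = ε^2 * rε / 3 := by
  have hr : 0 < rε := hε.trans hεr
  have hne : rε - ε ≠ 0 := (sub_pos.2 hεr).ne'
  have gmeas : Measurable (fun t : ℝ => t^2 * (pchi ε rε t)^2) :=
    (measurable_id.pow_const 2).mul ((pchi_meas ε rε).pow_const 2)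
  rw [split3 ε rε _ hε hεr gmeas (rε^2)
    (fun t ht => by
      have h0 := pchi_nonneg hε hεr t
      have h1' := pchi_le_one hε hεr t
      rw [Real.norm_eq_abs, abs_of_nonneg (by positivity)]
      have ht2 : t^2 ≤ rε^2 := by nlinarith [ht.1, ht.2]
      have hp2 : pchi ε rε t ^ 2 ≤ 1 := by nlinarith
      nlinarith [mul_le_mul ht2 hp2 (by positivity) (sq_nonneg rε)])
    (fun t ht => by
      have : pchi ε rε t = 0 := by
        unfold pchi
        rw [if_neg (by linarith), if_neg (by linarith)]
      simp [this])]
  have h3 : ∫ t in Set.Ioc (0:ℝ) ε, t^2 * (pchi ε rε t)^2 = ε^3/3 := by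
    rw [setIntegral_congr_fun measurableSet_Ioc (g := fun t => t^2)
      (fun t ht => by
        have : pchi ε rε t = 1 := by unfold pchi; rw [if_pos ht.2]
        simp [this])]
    rw [← intervalIntegral.integral_of_le hε.le, integral_pow]
    norm_num
  have h4 : ∫ t in Set.Ioc ε rε, t^2 * (pchi ε rε t)^2
      = (ε * rε / (rε - ε))^2 * (rε - ε)^3 / (3 * rε^2) := by
    rw [setIntegral_congr_fun measurableSet_Ioc
      (g := fun t => (ε * rε / (rε - ε))^2 * (1 - t/rε)^2)
      (fun t ht => ?_)]
    · rw [← intervalIntegral.integral_of_le hεr.le]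
      have key := intervalIntegral.integral_eq_sub_of_hasDerivAt (a := ε) (b := rε)
        (f := fun t => -((ε * rε / (rε - ε))^2 * rε/3) * (1 - t/rε)^3)
        (f' := fun t => (ε * rε / (rε - ε))^2 * (1 - t/rε)^2)
        (fun t _ => by
          have h1' : HasDerivAt (fun t : ℝ => 1 - t/rε) (-(1/rε)) t := by
            simpa using ((hasDerivAt_id t).div_const rε).const_sub 1
          have h2' := (h1'.pow 3).const_mul (-((ε * rε / (rε - ε))^2 * rε/3))
          convert h2' using 1
          · rfl
          · rfl
          rw [show (3:ℕ)-1 = 2 from rfl]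
          push_cast
          have := mul_one_div_cancel hr.ne'
          linear_combination (-(ε * rε / (rε - ε))^2 * (1 - t/rε)^2) * this)
        ((continuous_const.mul
            ((continuous_const.sub (continuous_id.div_const rε)).pow 2)).intervalIntegrable _ _)
      rw [key]
      have hdiv : rε/rε = 1 := div_self hr.ne'
      generalize (ε * rε / (rε - ε))^2 = C
      simp only [hdiv, sub_self]
      field_simp
      ring
    · obtain ⟨ht1, ht2⟩ := ht
      have ht0 : 0 < t := hε.trans ht1
      by_cases htr : t < rε
      · have hval : pchi ε rε t = (ε * rε / (rε - ε)) * (1/t - 1/rε) := by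
          unfold pchi; rw [if_neg (not_le.2 ht1), if_pos htr]
        have hx : t * (1/t - 1/rε) = 1 - t/rε := by
          field_simp
        calc t^2 * (pchi ε rε t)^2
            = (ε * rε / (rε - ε))^2 * (t * (1/t - 1/rε))^2 := by rw [hval]; ring
          _ = (ε * rε / (rε - ε))^2 * (1 - t/rε)^2 := by rw [hx]
      · have htr' : t = rε := le_antisymm ht2 (not_lt.1 htr)
        have hval : pchi ε rε rε = 0 := by
          unfold pchi; rw [if_neg (not_le.2 hεr), if_neg (lt_irrefl rε)]
        rw [htr']
        simp [hval, div_self hr.ne']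
  have hC2 : (ε * rε / (rε - ε))^2 * (rε - ε)^3 = ε^2 * rε^2 * (rε - ε) := by
    field_simp
  rw [h3, h4, hC2]
  field_simp
  ring

lemma radialGrad (ε rε : ℝ) (hε : 0 < ε) (hεr : ε < rε) :
    ∫ t in Set.Ioi (0:ℝ), t^2 * (gprof ε rε t)^2
      = (ε * rε / (rε - ε))^2 * (1/ε - 1/rε) := by
  have hr : 0 < rε := hε.trans hεr
  have hne : rε - ε ≠ 0 := (sub_pos.2 hεr).ne'
  have gmeas : Measurable (fun t : ℝ => t^2 * (gprof ε rε t)^2) :=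
    (measurable_id.pow_const 2).mul ((gprof_meas ε rε).pow_const 2)
  have hgb : ∀ t, |gprof ε rε t| ≤ (ε * rε / (rε - ε)) * (ε^2)⁻¹ := by
    intro t
    unfold gprof
    split_ifs with h
    · obtain ⟨h1, h2⟩ := h
      have ht : 0 < t := hε.trans h1
      have hc : 0 < ε * rε / (rε - ε) := div_pos (by positivity) (by linarith)
      rw [abs_of_nonneg (by positivity)]
      have : (t^2)⁻¹ ≤ (ε^2)⁻¹ := by
        apply inv_anti₀ (by positivity)
        nlinarith
      exact mul_le_mul_of_nonneg_left this hc.le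
    · rw [abs_zero]
      have hc : 0 < ε * rε / (rε - ε) := div_pos (by positivity) (by linarith)
      positivity
  rw [split3 ε rε _ hε hεr gmeas (rε^2 * ((ε * rε / (rε - ε)) * (ε^2)⁻¹)^2)
    (fun t ht => by
      rw [Real.norm_eq_abs, abs_of_nonneg (by positivity)]
      have ht2 : t^2 ≤ rε^2 := by nlinarith [ht.1, ht.2]
      have := hgb t
      have habs : (gprof ε rε t)^2 ≤ ((ε * rε / (rε - ε)) * (ε^2)⁻¹)^2 := by
        rw [← sq_abs (gprof ε rε t)]
        exact pow_le_pow_left₀ (abs_nonneg _) this 2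
      exact mul_le_mul ht2 habs (by positivity) (by positivity))
    (fun t ht => by
      have : gprof ε rε t = 0 := by
        unfold gprof
        rw [if_neg (by push_neg; intro _; linarith)]
      simp [this])]
  have h3 : ∫ t in Set.Ioc (0:ℝ) ε, t^2 * (gprof ε rε t)^2 = 0 := by
    rw [setIntegral_congr_fun measurableSet_Ioc (g := fun _ => (0:ℝ))
      (fun t ht => by
        have : gprof ε rε t = 0 := by
          unfold gprof
          rw [if_neg (by push_neg; intro h; linarith [ht.2])]
        simp [this])]
    simp
  have h4 : ∫ t in Set.Ioc ε rε, t^2 * (gprof ε rε t)^2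
      = (ε * rε / (rε - ε))^2 * (1/ε - 1/rε) := by
    rw [MeasureTheory.integral_Ioc_eq_integral_Ioo,
      setIntegral_congr_fun measurableSet_Ioo
        (g := fun t => (ε * rε / (rε - ε))^2 * (t^2)⁻¹)
        (fun t ht => by
          have ht0 : 0 < t := hε.trans ht.1
          have : gprof ε rε t = (ε * rε / (rε - ε)) * (t^2)⁻¹ := by
            unfold gprof
            rw [if_pos ⟨ht.1, ht.2⟩]
          rw [this]
          field_simp),
      ← MeasureTheory.integral_Ioc_eq_integral_Ioo,
      ← intervalIntegral.integral_of_le hεr.le]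
    have key := intervalIntegral.integral_eq_sub_of_hasDerivAt (a := ε) (b := rε)
      (f := fun t => -(ε * rε / (rε - ε))^2 * t⁻¹)
      (f' := fun t => (ε * rε / (rε - ε))^2 * (t^2)⁻¹)
      (fun t ht => by
        have ht0 : t ≠ 0 := by
          rw [Set.uIcc_of_le hεr.le] at ht
          exact (hε.trans_le ht.1).ne'
        have := (hasDerivAt_inv ht0).const_mul (-(ε * rε / (rε - ε))^2)
        convert this using 1
        · rfl
        ring)
      (by
        apply ContinuousOn.intervalIntegrable
        apply ContinuousOn.mul continuousOn_const
        apply ContinuousOn.inv₀ ((continuousOn_id.pow 2))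
        intro t ht
        rw [Set.uIcc_of_le hεr.le] at ht
        have : 0 < t := hε.trans_le ht.1
        exact pow_ne_zero 2 this.ne')
    rw [key]
    field_simp
    ring
  rw [h3, h4, zero_add]

lemma volball3 : (volume (Metric.ball (0 : E3) 1)).toReal = 4*π/3 := by
  rw [EuclideanSpace.volume_ball]
  have h52 : ((Fintype.card (Fin 3) : ℝ)/2 + 1) = 3/2 + 1 := by norm_num
  rw [h52, Real.Gamma_add_one (by norm_num)]
  have h32 : (3/2 : ℝ) = 1/2 + 1 := by norm_num
  rw [h32, Real.Gamma_add_one (by norm_num), Real.Gamma_one_half_eq]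
  have hπ : (0:ℝ) < π := Real.pi_pos
  have hsq : Real.sqrt π > 0 := Real.sqrt_pos.2 hπ
  rw [ENNReal.ofReal_one, one_pow, one_mul, ENNReal.toReal_ofReal (by positivity)]
  have : Real.sqrt π ^ (Fintype.card (Fin 3)) = π * Real.sqrt π := by
    rw [Fintype.card_fin]
    rw [show (3:ℕ) = 2 + 1 from rfl, pow_succ, Real.sq_sqrt hπ.le]
  rw [this]
  field_simp
  ring

lemma radial3 (f : ℝ → ℝ) :
    ∫ z : E3, f ‖z‖ = (4*π) * ∫ t in Set.Ioi (0:ℝ), t^2 * f t := by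
  rw [MeasureTheory.integral_fun_norm_addHaar volume f]
  simp only [finrank_euclideanSpace, Fintype.card_fin, smul_eq_mul, nsmul_eq_mul]
  rw [measureReal_def, volball3]
  norm_num
  ring

lemma int_pchi_sq (ε rε : ℝ) (hε : 0 < ε) (hεr : ε < rε) :
    ∫ z : E3, (pchi ε rε ‖z‖)^2 = (4*π/3) * (ε^2 * rε) := by
  rw [radial3 (fun t => (pchi ε rε t)^2), radialL2 ε rε hε hεr]
  ring

lemma int_gprof_sq (ε rε : ℝ) (hε : 0 < ε) (hεr : ε < rε) :
    ∫ z : E3, (gprof ε rε ‖z‖)^2 = (4*π) * (ε * rε / (rε - ε)) := by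
  have hr : 0 < rε := hε.trans hεr
  have hne : rε - ε ≠ 0 := (sub_pos.2 hεr).ne'
  rw [radial3 (fun t => (gprof ε rε t)^2), radialGrad ε rε hε hεr]
  have : (ε * rε / (rε - ε))^2 * (1/ε - 1/rε) = ε * rε / (rε - ε) := by
    field_simp
  rw [this]

lemma hasFDerivAt_inv_norm {y : E3} (hy : y ≠ 0) :
    HasFDerivAt (fun z : E3 => ‖z‖⁻¹) ((-(‖y‖^3)⁻¹) • (innerSL ℝ y)) y := by
  have hny : ‖y‖ ≠ 0 := norm_ne_zero_iff.2 hy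
  have hn2 : HasFDerivAt (fun z : E3 => ‖z‖^2) ((2:ℕ) • innerSL ℝ y) y :=
    (hasStrictFDerivAt_norm_sq y).hasFDerivAt
  have hsqrt : HasDerivAt Real.sqrt (1/(2*Real.sqrt (‖y‖^2))) (‖y‖^2) :=
    Real.hasDerivAt_sqrt (by positivity)
  have hcomp := hsqrt.comp_hasFDerivAt y hn2
  simp only [Function.comp_def, Real.sqrt_sq, norm_nonneg] at hcomp
  have hs : (1/(2*‖y‖)) • ((2:ℕ) • innerSL ℝ y) = ‖y‖⁻¹ • innerSL ℝ y := by
    rw [← Nat.cast_smul_eq_nsmul ℝ, smul_smul]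
    congr 1
    field_simp
    norm_num
  rw [hs] at hcomp
  have hinv := (hasDerivAt_inv hny).comp_hasFDerivAt y hcomp
  simp only [Function.comp_def] at hinv
  rw [smul_smul] at hinv
  have hsc : (-(‖y‖^2)⁻¹) * ‖y‖⁻¹ = -(‖y‖^3)⁻¹ := by
    field_simp
  rw [hsc] at hinv
  exact hinv

lemma norm_inv_norm_deriv {y : E3} (hy : y ≠ 0) :
    ‖(-(‖y‖^3)⁻¹ : ℝ) • (innerSL ℝ y)‖ = (‖y‖^2)⁻¹ := by
  have hny : 0 < ‖y‖ := norm_pos_iff.2 hy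
  rw [norm_smul (-(‖y‖^3)⁻¹ : ℝ) (innerSL ℝ y), innerSL_apply_norm]
  rw [Real.norm_eq_abs, abs_neg, abs_inv, abs_of_nonneg (by positivity)]
  field_simp

lemma norm_gradient_eq (f : E3 → ℝ) (y : E3) : ‖gradient f y‖ = ‖fderiv ℝ f y‖ := by
  unfold gradient
  exact LinearIsometryEquiv.norm_map _ _

/- ### The main theorem -/

/-- Let `N = 1/ε`, `r_ε = ε^{1/3}`, points `x_i` with `|x_i - x_j| > 2 r_ε`
for `i ≠ j`, and reals `T_i` with `ε Σᵢ T_i² ≤ K`.  With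
`S_ε(y) = Σᵢ T_i χ[1](y - x_i)`, where `χ[1]` is the capacity potential of `B(0,ε)` in
`B(0,r_ε)`, one has `‖S_ε‖²_{L²} ≤ (4π/3) ε² r_ε Σᵢ T_i² ≤ (4π/3) K ε r_ε` and, for
`ε < 1/8`, `‖∇S_ε‖²_{L²} ≤ 4π (ε r_ε/(r_ε - ε)) Σᵢ T_i² ≤ 8π K`. -/
theorem stmt8
    (ε rε K : ℝ) (hε : 0 < ε) (hεsmall : ε < 1 / 8) (hrε : rε = ε ^ ((1:ℝ)/3))
    (N : ℕ) (hN : (N : ℝ) = 1 / ε)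
    (x : Fin N → EuclideanSpace ℝ (Fin 3))
    (hsep : ∀ i j, i ≠ j → 2 * rε < dist (x i) (x j))
    (T : Fin N → ℝ) (hT : ε * ∑ i, (T i) ^ 2 ≤ K) :
    (∫ y : EuclideanSpace ℝ (Fin 3), (∑ i, T i * capPot ε rε (y - x i)) ^ 2 ≤
        (4 * π / 3) * ε ^ 2 * rε * ∑ i, (T i) ^ 2 ∧
      ∫ y : EuclideanSpace ℝ (Fin 3), (∑ i, T i * capPot ε rε (y - x i)) ^ 2 ≤
        (4 * π / 3) * K * ε * rε) ∧
    (∫ y : EuclideanSpace ℝ (Fin 3),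
        ‖gradient (fun z => ∑ i, T i * capPot ε rε (z - x i)) y‖ ^ 2 ≤
        4 * π * (ε * rε / (rε - ε)) * ∑ i, (T i) ^ 2 ∧
      ∫ y : EuclideanSpace ℝ (Fin 3),
        ‖gradient (fun z => ∑ i, T i * capPot ε rε (z - x i)) y‖ ^ 2 ≤ 8 * π * K) := by
  -- Basic numeric facts
  have hcube : rε^(3:ℕ) = ε := by
    rw [hrε, ← Real.rpow_natCast (ε ^ ((1:ℝ)/3)) 3, ← Real.rpow_mul hε.le]
    norm_num
  have hrpos : 0 < rε := by rw [hrε]; positivity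
  have hrhalf : rε < 1/2 := by
    by_contra h
    push_neg at h
    have := pow_le_pow_left₀ (by norm_num : (0:ℝ) ≤ 1/2) h 3
    rw [hcube] at this
    norm_num at this
    linarith
  have hsq4 : rε^2 < 1/4 := by nlinarith [hrpos, hrhalf]
  have h2ε : 2*ε < rε := by
    nlinarith [hcube, mul_pos hrpos (show (0:ℝ) < 1 - 2*rε^2 by linarith)]
  have hεr : ε < rε := by
    nlinarith [hcube, mul_pos hrpos (show (0:ℝ) < 1 - rε^2 by nlinarith)]
  have hsub : (0:ℝ) < rε - ε := by linarith
  have hSnn : 0 ≤ ∑ i, T i ^ 2 := Finset.sum_nonneg fun i _ => sq_nonneg _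
  have hK0 : 0 ≤ K := le_trans (by positivity) hT
  have hcpos : 0 < ε * rε / (rε - ε) := div_pos (by positivity) hsub
  -- capPot facts
  have hcap0 : ∀ z : E3, rε < ‖z‖ → capPot ε rε z = 0 := by
    intro z hz
    rw [capPot_eq_pchi]
    unfold pchi
    rw [if_neg (by linarith), if_neg (by linarith)]
  have hcapnn : ∀ z : E3, 0 ≤ capPot ε rε z := fun z => pchi_nonneg hε hεr _
  have hcap1 : ∀ z : E3, capPot ε rε z ≤ 1 := fun z => pchi_le_one hε hεr _
  have hcapsupp : ∀ z : E3, capPot ε rε z ≠ 0 → ‖z‖ < rε := by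
    intro z hz
    by_contra hcon
    push_neg at hcon
    apply hz
    rw [capPot_eq_pchi]
    unfold pchi
    rw [if_neg (by linarith), if_neg (not_lt.2 hcon)]
  have hother : ∀ (j : Fin N) (z : E3), ‖z - x j‖ < rε → ∀ i, i ≠ j → rε < ‖z - x i‖ := by
    intro j z hz i hij
    have hd := hsep i j hij
    have htri : dist (x i) (x j) ≤ dist (x i) z + dist z (x j) := dist_triangle _ _ _
    rw [dist_comm (x i) z, dist_eq_norm z (x i), dist_eq_norm z (x j)] at htri
    linarith
  -- measurability / integrability
  have hcapMeas : Measurable (capPot ε rε) := by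
    have : capPot ε rε = fun z => pchi ε rε ‖z‖ := funext (capPot_eq_pchi ε rε)
    rw [this]
    exact (pchi_meas ε rε).comp measurable_norm
  have hint1 : ∀ i : Fin N, Integrable (fun y : E3 => (capPot ε rε (y - x i))^2) := by
    intro i
    have hm : Measurable fun y : E3 => (capPot ε rε (y - x i))^2 :=
      (hcapMeas.comp (measurable_id.sub_const (x i))).pow_const 2
    refine Integrable.mono' (g := (Metric.closedBall (x i) rε).indicator fun _ => (1:ℝ)) ?_
      hm.aestronglyMeasurable ?_
    · exact (integrableOn_const measure_closedBall_lt_top.ne).integrable_indicator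
        measurableSet_closedBall
    · refine Filter.Eventually.of_forall fun y => ?_
      by_cases hy : y ∈ Metric.closedBall (x i) rε
      · rw [Set.indicator_of_mem hy]
        rw [Real.norm_eq_abs, abs_of_nonneg (by positivity)]
        nlinarith [hcapnn (y - x i), hcap1 (y - x i)]
      · rw [Set.indicator_of_notMem hy]
        have hlt : rε < ‖y - x i‖ := by
          simp only [Metric.mem_closedBall, not_le, dist_eq_norm] at hy
          exact hy
        rw [hcap0 _ hlt]
        norm_num
  have hgprofMeas : ∀ i : Fin N, Measurable fun y : E3 => (gprof ε rε ‖y - x i‖)^2 :=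
    fun i => (((gprof_meas ε rε).comp (measurable_norm.comp
      (measurable_id.sub_const (x i))))).pow_const 2
  have hgprof0 : ∀ t : ℝ, rε < t → gprof ε rε t = 0 := by
    intro t ht
    unfold gprof
    rw [if_neg (by push_neg; intro _; linarith)]
  have hgprof_nn : ∀ t : ℝ, 0 ≤ gprof ε rε t := by
    intro t
    unfold gprof
    split_ifs with h
    · have : 0 < t := hε.trans h.1
      positivity
    · exact le_refl 0
  have hgprof_le : ∀ t : ℝ, gprof ε rε t ≤ (ε * rε / (rε - ε)) * (ε^2)⁻¹ := by
    intro t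
    unfold gprof
    split_ifs with h
    · have ht : 0 < t := hε.trans h.1
      have : (t^2)⁻¹ ≤ (ε^2)⁻¹ := by
        apply inv_anti₀ (by positivity)
        nlinarith [h.1]
      exact mul_le_mul_of_nonneg_left this hcpos.le
    · positivity
  have hint2 : ∀ i : Fin N, Integrable (fun y : E3 => (gprof ε rε ‖y - x i‖)^2) := by
    intro i
    refine Integrable.mono' (g := (Metric.closedBall (x i) rε).indicator
      fun _ => ((ε * rε / (rε - ε)) * (ε^2)⁻¹)^2) ?_ (hgprofMeas i).aestronglyMeasurable ?_
    · exact (integrableOn_const measure_closedBall_lt_top.ne).integrable_indicator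
        measurableSet_closedBall
    · refine Filter.Eventually.of_forall fun y => ?_
      by_cases hy : y ∈ Metric.closedBall (x i) rε
      · rw [Set.indicator_of_mem hy]
        rw [Real.norm_eq_abs, abs_of_nonneg (by positivity)]
        have h1 := hgprof_nn ‖y - x i‖
        have h2 := hgprof_le ‖y - x i‖
        nlinarith
      · rw [Set.indicator_of_notMem hy]
        have hlt : rε < ‖y - x i‖ := by
          simp only [Metric.mem_closedBall, not_le, dist_eq_norm] at hy
          exact hy
        rw [hgprof0 _ hlt]
        norm_num
  -- pointwise expansion of the square
  have hpt : ∀ y : E3, (∑ i, T i * capPot ε rε (y - x i))^2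
      = ∑ i, (T i)^2 * (capPot ε rε (y - x i))^2 := by
    intro y
    rw [sq, Finset.sum_mul_sum]
    refine Finset.sum_congr rfl fun i _ => ?_
    rw [Finset.sum_eq_single i]
    · ring
    · intro j _ hji
      rcases eq_or_ne (capPot ε rε (y - x i)) 0 with h | h
      · rw [h]
        ring
      · have hi : ‖y - x i‖ < rε := hcapsupp _ h
        rw [hcap0 _ (hother i y hi j hji)]
        ring
    · intro h
      exact absurd (Finset.mem_univ i) h
  -- the L² identity
  have hL2 : ∫ y : E3, (∑ i, T i * capPot ε rε (y - x i))^2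
      = (4*π/3) * (ε^2*rε) * ∑ i, (T i)^2 := by
    rw [integral_congr_ae (Filter.Eventually.of_forall hpt)]
    rw [integral_finset_sum _ (fun i _ => (hint1 i).const_mul ((T i)^2))]
    have hone : ∀ i : Fin N, ∫ y : E3, (T i)^2 * (capPot ε rε (y - x i))^2
        = (T i)^2 * ((4*π/3)*(ε^2*rε)) := by
      intro i
      rw [integral_const_mul]
      congr 1
      have h1 : ∫ y : E3, (capPot ε rε (y - x i))^2 = ∫ z : E3, (capPot ε rε z)^2 :=
        integral_sub_right_eq_self (fun z : E3 => (capPot ε rε z)^2) (x i)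
      rw [h1]
      simp only [capPot_eq_pchi]
      exact int_pchi_sq ε rε hε hεr
    rw [Finset.sum_congr rfl fun i _ => hone i, ← Finset.sum_mul]
    ring
  constructor
  · constructor
    · rw [hL2]
      apply le_of_eq
      ring
    · rw [hL2]
      have hm : (0:ℝ) ≤ (4*π/3)*ε*rε := by positivity
      nlinarith [mul_le_mul_of_nonneg_left hT hm]
  -- gradient part
  · have hGint : Integrable (fun y : E3 => ∑ i, (T i)^2 * (gprof ε rε ‖y - x i‖)^2) :=
      integrable_finset_sum _ fun i _ => (hint2 i).const_mul _
    have hGval : ∫ y : E3, ∑ i, (T i)^2 * (gprof ε rε ‖y - x i‖)^2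
        = (4*π) * (ε * rε / (rε - ε)) * ∑ i, (T i)^2 := by
      rw [integral_finset_sum _ (fun i _ => (hint2 i).const_mul _)]
      have hone : ∀ i : Fin N, ∫ y : E3, (T i)^2 * (gprof ε rε ‖y - x i‖)^2
          = (T i)^2 * ((4*π) * (ε * rε / (rε - ε))) := by
        intro i
        rw [integral_const_mul]
        congr 1
        have h1 : ∫ y : E3, (gprof ε rε ‖y - x i‖)^2 = ∫ z : E3, (gprof ε rε ‖z‖)^2 :=
          integral_sub_right_eq_self (fun z : E3 => (gprof ε rε ‖z‖)^2) (x i)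
        rw [h1]
        exact int_gprof_sq ε rε hε hεr
      rw [Finset.sum_congr rfl fun i _ => hone i, ← Finset.sum_mul]
      ring
    have hGnn : ∀ y : E3, 0 ≤ ∑ i, (T i)^2 * (gprof ε rε ‖y - x i‖)^2 :=
      fun y => Finset.sum_nonneg fun i _ => by positivity
    -- a.e. pointwise bound on the gradient
    have hsph : ∀ᵐ y : E3, ∀ i : Fin N, ‖y - x i‖ ≠ ε ∧ ‖y - x i‖ ≠ rε := by
      rw [MeasureTheory.ae_all_iff]
      intro i
      have h1 : volume (Metric.sphere (x i) ε) = 0 := Measure.addHaar_sphere volume _ _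
      have h2 : volume (Metric.sphere (x i) rε) = 0 := Measure.addHaar_sphere volume _ _
      filter_upwards [measure_eq_zero_iff_ae_notMem.1 h1, measure_eq_zero_iff_ae_notMem.1 h2]
        with y hy1 hy2
      rw [Metric.mem_sphere, dist_eq_norm] at hy1 hy2
      exact ⟨hy1, hy2⟩
    have hbound : ∀ᵐ y : E3,
        ‖gradient (fun z => ∑ i, T i * capPot ε rε (z - x i)) y‖^2
          ≤ ∑ i, (T i)^2 * (gprof ε rε ‖y - x i‖)^2 := by
      filter_upwards [hsph] with y hy
      have hcont : ∀ i : Fin N, ContinuousAt (fun z : E3 => ‖z - x i‖) y :=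
        fun i => ((continuous_id.sub continuous_const).norm).continuousAt
      by_cases hexj : ∃ j, ‖y - x j‖ < rε
      · obtain ⟨j, hj⟩ := hexj
        rcases lt_or_gt_of_ne (hy j).1 with hlt | hgt
        · -- inside the small ball: locally constant
          have hev : ∀ᶠ z in nhds y, ‖z - x j‖ < ε :=
            (hcont j).eventually_lt continuousAt_const hlt
          have hFe : (fun z : E3 => ∑ i, T i * capPot ε rε (z - x i))
              =ᶠ[nhds y] fun _ => T j := by
            filter_upwards [hev] with z hz
            rw [Finset.sum_eq_single j]
            · have : capPot ε rε (z - x j) = 1 := by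
                rw [capPot_eq_pchi]
                unfold pchi
                rw [if_pos hz.le]
              rw [this, mul_one]
            · intro i _ hij
              rw [hcap0 _ (hother j z (hz.trans hεr) i hij), mul_zero]
            · intro h
              exact absurd (Finset.mem_univ j) h
          rw [norm_gradient_eq, hFe.fderiv_eq, fderiv_const_apply]
          simpa using hGnn y
        · -- in the annulus
          have hyj0 : y - x j ≠ 0 := by
            intro h
            rw [h, norm_zero] at hgt
            linarith
          have hev1 : ∀ᶠ z in nhds y, ε < ‖z - x j‖ :=
            continuousAt_const.eventually_lt (hcont j) hgt
          have hev2 : ∀ᶠ z in nhds y, ‖z - x j‖ < rε :=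
            (hcont j).eventually_lt continuousAt_const hj
          have hFe : (fun z : E3 => ∑ i, T i * capPot ε rε (z - x i))
              =ᶠ[nhds y] fun z => T j * ((ε * rε / (rε - ε)) * (‖z - x j‖⁻¹ - 1/rε)) := by
            filter_upwards [hev1, hev2] with z hz1 hz2
            rw [Finset.sum_eq_single j]
            · congr 1
              rw [capPot_eq_pchi]
              unfold pchi
              rw [if_neg (not_le.2 hz1), if_pos hz2, one_div]
            · intro i _ hij
              rw [hcap0 _ (hother j z hz2 i hij), mul_zero]
            · intro h
              exact absurd (Finset.mem_univ j) h
          have htr : HasFDerivAt (fun z : E3 => z - x j) (ContinuousLinearMap.id ℝ _) y :=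
            (hasFDerivAt_id y).sub_const (x j)
          have hcompd := (hasFDerivAt_inv_norm (y := y - x j) hyj0).comp y htr
          rw [ContinuousLinearMap.comp_id] at hcompd
          simp only [Function.comp_def] at hcompd
          have hfull := ((hcompd.sub_const (1/rε)).const_mul
            (ε * rε / (rε - ε))).const_mul (T j)
          have hfd : fderiv ℝ (fun z : E3 => ∑ i, T i * capPot ε rε (z - x i)) y
              = (T j) • ((ε * rε / (rε - ε)) •
                ((-(‖y - x j‖^3)⁻¹) • innerSL ℝ (y - x j))) := by
            rw [hFe.fderiv_eq]
            exact hfull.fderiv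
          rw [norm_gradient_eq, hfd, norm_smul, norm_smul, norm_inv_norm_deriv hyj0]
          have hgj : gprof ε rε ‖y - x j‖ = (ε * rε / (rε - ε)) * ((‖y - x j‖)^2)⁻¹ := by
            unfold gprof
            rw [if_pos ⟨hgt, hj⟩]
          have hterm : (‖(T j : ℝ)‖ * (‖(ε * rε / (rε - ε) : ℝ)‖ * (‖y - x j‖^2)⁻¹))^2
              = (T j)^2 * (gprof ε rε ‖y - x j‖)^2 := by
            rw [hgj, Real.norm_eq_abs, Real.norm_eq_abs, abs_of_pos hcpos]
            rw [mul_pow, mul_pow, sq_abs]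
          rw [hterm]
          exact Finset.single_le_sum (f := fun i => (T i)^2 * (gprof ε rε ‖y - x i‖)^2)
            (fun i _ => by positivity) (Finset.mem_univ j)
      · -- far from all balls : locally zero
        push_neg at hexj
        have hstrict : ∀ i, rε < ‖y - x i‖ := by
          intro i
          exact lt_of_le_of_ne (hexj i) (Ne.symm (hy i).2)
        have hev : ∀ᶠ z in nhds y, ∀ i, rε < ‖z - x i‖ := by
          rw [Filter.eventually_all]
          intro i
          exact continuousAt_const.eventually_lt (hcont i) (hstrict i)
        have hFe : (fun z : E3 => ∑ i, T i * capPot ε rε (z - x i))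
            =ᶠ[nhds y] fun _ => (0:ℝ) := by
          filter_upwards [hev] with z hz
          rw [Finset.sum_eq_zero]
          intro i _
          rw [hcap0 _ (hz i), mul_zero]
        rw [norm_gradient_eq, hFe.fderiv_eq, fderiv_const_apply]
        simpa using hGnn y
    have hmono := integral_mono_of_nonneg
      (Filter.Eventually.of_forall fun y => sq_nonneg _) hGint hbound
    constructor
    · exact hmono.trans_eq (by rw [hGval])
    · refine hmono.trans ?_
      rw [hGval]
      have ha : ε * rε / (rε - ε) ≤ 2*ε := by
        rw [div_le_iff₀ hsub]
        nlinarith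
      have step1 : (ε * rε/(rε - ε)) * (∑ i, T i ^ 2) ≤ (2*ε) * ∑ i, T i ^ 2 :=
        mul_le_mul_of_nonneg_right ha hSnn
      have hA := mul_le_mul_of_nonneg_left step1 (by positivity : (0:ℝ) ≤ 4*π)
      have hB := mul_le_mul_of_nonneg_left hT (by positivity : (0:ℝ) ≤ 8*π)
      nlinarith [hA, hB]


end
end
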